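/- Let R₀^! = F₂⟨w, z, θ⟩/(w², z², wθ+θw, zθ+θz, θ²), equipped with the F₂-linear derivation μ₁ determined by μ₁(w) = μ₁(z) = 0 and μ₁(θ) = wz + zw, extended by the Leibniz rule. Then μ₁ is well-defined on the quotient, satisfies μ₁² = 0, and the homology algebra H(R₀^!, μ₁) is isomorphic to the exterior algebra F₂⟨w,z⟩/(w², z², wz + zw), which has dimension 4 over F₂ with basis {1, w, z, wz}. -/

import Mathlib

/-- Relations defining `R₀^! = F₂⟨w,z,θ⟩/(w², z², wθ+θw, zθ+θz, θ²)` (char 2, so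
`wθ+θw = 0` is `wθ = θw`). Letters: `0 = w`, `1 = z`, `2 = θ`. -/
inductive relK : FreeAlgebra (ZMod 2) (Fin 3) → FreeAlgebra (ZMod 2) (Fin 3) → Prop
  | wsq : relK (FreeAlgebra.ι (ZMod 2) 0 * FreeAlgebra.ι (ZMod 2) 0) 0
  | zsq : relK (FreeAlgebra.ι (ZMod 2) 1 * FreeAlgebra.ι (ZMod 2) 1) 0
  | wth : relK (FreeAlgebra.ι (ZMod 2) 0 * FreeAlgebra.ι (ZMod 2) 2)
      (FreeAlgebra.ι (ZMod 2) 2 * FreeAlgebra.ι (ZMod 2) 0)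
  | zth : relK (FreeAlgebra.ι (ZMod 2) 1 * FreeAlgebra.ι (ZMod 2) 2)
      (FreeAlgebra.ι (ZMod 2) 2 * FreeAlgebra.ι (ZMod 2) 1)
  | thsq : relK (FreeAlgebra.ι (ZMod 2) 2 * FreeAlgebra.ι (ZMod 2) 2) 0

/-- The algebra `R₀^!`. -/
abbrev R0dual := RingQuot relK

noncomputable def wK : R0dual := RingQuot.mkRingHom relK (FreeAlgebra.ι (ZMod 2) 0)
noncomputable def zK : R0dual := RingQuot.mkRingHom relK (FreeAlgebra.ι (ZMod 2) 1)
noncomputable def thK : R0dual := RingQuot.mkRingHom relK (FreeAlgebra.ι (ZMod 2) 2)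

/-- Relations defining the exterior algebra `E = F₂⟨w,z⟩/(w², z², wz+zw)`. -/
inductive relE : FreeAlgebra (ZMod 2) (Fin 2) → FreeAlgebra (ZMod 2) (Fin 2) → Prop
  | wsq : relE (FreeAlgebra.ι (ZMod 2) 0 * FreeAlgebra.ι (ZMod 2) 0) 0
  | zsq : relE (FreeAlgebra.ι (ZMod 2) 1 * FreeAlgebra.ι (ZMod 2) 1) 0
  | comm : relE (FreeAlgebra.ι (ZMod 2) 0 * FreeAlgebra.ι (ZMod 2) 1)
      (FreeAlgebra.ι (ZMod 2) 1 * FreeAlgebra.ι (ZMod 2) 0)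

/-- The exterior algebra on two generators over `F₂`. -/
abbrev extAlg := RingQuot relE

noncomputable def wE : extAlg := RingQuot.mkRingHom relE (FreeAlgebra.ι (ZMod 2) 0)
noncomputable def zE : extAlg := RingQuot.mkRingHom relE (FreeAlgebra.ι (ZMod 2) 1)

/-!
Sending `w ↦ 1 + a`, `z ↦ 1 + b`, `θ ↦ ε` identifies `R₀^!` with the dual numbers over the
group algebra `F₂[D∞]` of the infinite dihedral group `D∞ = ⟨a, b | a², b²⟩`; the inverse comes
from the universal property of `F₂[D∞]`, since `1 + w` and `1 + z` are involutions. Under this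
identification `μ₁(s + tε) = tω` with `ω = wz + zw = ab + ba`, which is central. As `ab` has
infinite order, `ω` is not a zero divisor, so the cycles are `F₂[D∞]` and the boundaries are the
ideal `F₂[D∞]ω`. Finally `F₂[D∞]/(ω)` satisfies the defining relations of `E`, so the kernel of
`F₂[D∞] → E` is exactly `F₂[D∞]ω`.
-/

open TrivSqZeroExt DualNumber

theorem RingQuot.mkRingHom_eq_mkAlgHom (S : Type*) {A : Type*} [CommSemiring S] [Semiring A]
    [Algebra S A] {r : A → A → Prop} (x : A) :
    RingQuot.mkRingHom r x = RingQuot.mkAlgHom S r x := by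
  rw [← RingQuot.mkAlgHom_coe S]; rfl

theorem RingQuot.adjoin_range_mkAlgHom_ι {R X : Type*} [CommSemiring R]
    (r : FreeAlgebra R X → FreeAlgebra R X → Prop) :
    Algebra.adjoin R (Set.range fun x => RingQuot.mkAlgHom R r (FreeAlgebra.ι R x)) = ⊤ := by
  rw [Set.range_comp' (RingQuot.mkAlgHom R r), ← AlgHom.map_adjoin, FreeAlgebra.adjoin_range_ι,
    Algebra.map_top, AlgHom.range_eq_top]
  exact RingQuot.mkAlgHom_surjective R r

theorem MonoidAlgebra.adjoin_image_of_eq_top {k G : Type*} [CommSemiring k] [Monoid G]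
    {S : Set G} (hS : Submonoid.closure S = ⊤) : Algebra.adjoin k (of k G '' S) = ⊤ := by
  refine Algebra.eq_top_iff.2 fun f => ?_
  induction f using MonoidAlgebra.induction_on with
  | of g =>
    have hg : g ∈ Submonoid.closure S := hS ▸ Submonoid.mem_top g
    induction hg using Submonoid.closure_induction with
    | mem g hg => exact Algebra.subset_adjoin ⟨g, hg, rfl⟩
    | one => exact (map_one (of k G)).symm ▸ Subalgebra.one_mem _
    | mul g h _ _ hg hh => exact (map_mul (of k G) g h).symm ▸ Subalgebra.mul_mem _ hg hh
  | add f g hf hg => exact Subalgebra.add_mem _ hf hg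
  | smul r f hf => exact Subalgebra.smul_mem _ hf r

theorem MonoidAlgebra.eq_zero_of_mul_of_eq_self {k G : Type*} [Semiring k] [Group G] {g : G}
    (hg : ¬IsOfFinOrder g) {v : MonoidAlgebra k G} (hv : v * of k G g = v) : v = 0 := by
  have hshift (x : G) (n : ℕ) : v.coeff (x * g ^ n) = v.coeff x := by
    induction n with
    | zero => simp
    | succ n ih =>
      calc v.coeff (x * g ^ (n + 1)) = (v * of k G g).coeff (x * g ^ n * g) := by
            rw [hv, pow_succ, mul_assoc]
        _ = v.coeff x := by rw [of_apply, coeff_mul_single_mul, mul_one, ih]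
  by_contra hv0
  obtain ⟨x, hx⟩ := Finsupp.support_nonempty_iff.2 (MonoidAlgebra.coeff_eq_zero.not.2 hv0)
  refine Set.infinite_of_injective_forall_mem (f := fun n : ℕ => x * g ^ n) ?_ (fun n => ?_)
    v.coeff.support.finite_toSet
  · exact (mul_right_injective x).comp (injective_pow_iff_not_isOfFinOrder.2 hg)
  · simpa [hshift] using hx

theorem Submodule.eq_top_of_one_mem_of_mul_mem {R A : Type*} [CommSemiring R] [Semiring A]
    [Algebra R A] {s : Set A} (hs : Algebra.adjoin R s = ⊤) {P : Submodule R A} (h1 : 1 ∈ P)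
    (hmul : ∀ a ∈ s, ∀ p ∈ P, a * p ∈ P) : P = ⊤ := by
  refine Submodule.eq_top_iff'.2 fun x => mul_one x ▸ ?_
  have hx : x ∈ Algebra.adjoin R s := hs ▸ Algebra.mem_top
  suffices ∀ p ∈ P, x * p ∈ P from this 1 h1
  induction hx using Algebra.adjoin_induction with
  | mem a ha => exact hmul a ha
  | algebraMap r =>
    intro p hp
    rw [← Algebra.smul_def]
    exact P.smul_mem r hp
  | add a b _ _ ha hb =>
    intro p hp
    rw [add_mul]
    exact P.add_mem (ha p hp) (hb p hp)
  | mul a b _ _ ha hb =>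
    intro p hp
    rw [mul_assoc]
    exact ha _ (hb p hp)

def TwoSidedIdeal.ofCentral {R : Type*} [Ring R] (c : R) (hc : ∀ x, Commute x c) :
    TwoSidedIdeal R :=
  .mk' (Set.range (· * c)) ⟨0, zero_mul c⟩
    (by rintro _ _ ⟨x, rfl⟩ ⟨y, rfl⟩; exact ⟨x + y, add_mul x y c⟩)
    (by rintro _ ⟨x, rfl⟩; exact ⟨-x, neg_mul x c⟩)
    (by rintro x _ ⟨y, rfl⟩; exact ⟨x * y, mul_assoc x y c⟩)
    (by
      rintro _ y ⟨x, rfl⟩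
      exact ⟨x * y, show x * y * c = x * c * y by rw [mul_assoc, (hc y).eq, ← mul_assoc]⟩)

theorem TwoSidedIdeal.mem_ofCentral {R : Type*} [Ring R] {c : R} (hc : ∀ x, Commute x c)
    {x : R} : x ∈ ofCentral c hc ↔ ∃ y, y * c = x :=
  mem_mk' ..

namespace ZModModule

variable {A : Type*} [Ring A] [Module (ZMod 2) A]

theorem one_add_one_add (x : A) : 1 + (1 + x) = x := by
  rw [← add_assoc, add_self, zero_add]

theorem one_add_mul_self (x : A) : (1 + x) * (1 + x) = 1 + x * x := by
  rw [show (1 + x) * (1 + x) = 1 + (x + x) + x * x by noncomm_ring, add_self, add_zero]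

theorem one_add_mul_one_add_add (x y : A) :
    (1 + x) * (1 + y) + (1 + y) * (1 + x) = x * y + y * x := by
  have h : (1 + x) * (1 + y) + (1 + y) * (1 + x)
      = (1 + 1) + (x + x) + (y + y) + (x * y + y * x) := by noncomm_ring
  simp only [h, add_self, zero_add]

end ZModModule

namespace DualNumber

variable {A : Type*} [Ring A] [Algebra (ZMod 2) A]

def epsDeriv (c : A) : A[ε] →ₗ[ZMod 2] A[ε] where
  toFun u := inl (u.snd * c)
  map_add' u v := by rw [snd_add, add_mul, inl_add]
  map_smul' r u := by rw [snd_smul, smul_mul_assoc, inl_smul]; rfl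

variable (c : A)

theorem epsDeriv_apply (u : A[ε]) : epsDeriv c u = inl (u.snd * c) := rfl

theorem epsDeriv_inl (a : A) : epsDeriv c (inl a) = 0 := by
  rw [epsDeriv_apply, snd_inl, zero_mul, inl_zero]

theorem epsDeriv_inr (a : A) : epsDeriv c (inr a) = inl (a * c) := by
  rw [epsDeriv_apply, snd_inr]

theorem epsDeriv_eps : epsDeriv c ε = inl c := by
  rw [epsDeriv_apply, snd_eps, one_mul]

theorem epsDeriv_epsDeriv (u : A[ε]) : epsDeriv c (epsDeriv c u) = 0 :=
  epsDeriv_inl c _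

/-- Characteristic two is needed: the `ε`-parts of the two sides differ by `2 u.snd v.snd c`. -/
theorem epsDeriv_mul {c : A} (hc : ∀ a, Commute a c) (u v : A[ε]) :
    epsDeriv c (u * v) = epsDeriv c u * v + u * epsDeriv c v := by
  ext
  · simp only [epsDeriv_apply, fst_add, fst_mul, fst_inl, snd_mul, add_mul, mul_assoc,
      (hc v.fst).eq]
    abel
  · simp only [epsDeriv_apply, snd_add, snd_mul, fst_inl, snd_inl, mul_zero, zero_mul, add_zero,
      zero_add]
    rw [mul_assoc, ← (hc v.snd).eq, ZModModule.add_self]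

end DualNumber

def dihedralRels : Set (FreeGroup (Fin 2)) := {.of 0 * .of 0, .of 1 * .of 1}

abbrev InfDihedral := PresentedGroup dihedralRels

namespace InfDihedral

def a : InfDihedral := PresentedGroup.of 0
def b : InfDihedral := PresentedGroup.of 1

theorem a_mul_self : a * a = 1 := PresentedGroup.one_of_mem (by simp [dihedralRels])
theorem b_mul_self : b * b = 1 := PresentedGroup.one_of_mem (by simp [dihedralRels])

theorem closure_a_b : Submonoid.closure {a, b} = ⊤ := by
  have h := congrArg Subgroup.toSubmonoid (PresentedGroup.closure_range_of dihedralRels)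
  rwa [Subgroup.closure_toSubmonoid, show Set.range (PresentedGroup.of (rels := dihedralRels))
    = {a, b} by ext; simp [Fin.exists_fin_two, a, b, eq_comm], Set.inv_insert, Set.inv_singleton,
    inv_eq_of_mul_eq_one_left a_mul_self, inv_eq_of_mul_eq_one_left b_mul_self,
    Set.union_self] at h

def lift {M : Type*} [Monoid M] (x y : M) (hx : x * x = 1) (hy : y * y = 1) :
    InfDihedral →* M :=
  (Units.coeHom M).comp (PresentedGroup.toGroup (f := ![⟨x, x, hx, hx⟩, ⟨y, y, hy, hy⟩])
    (by rintro _ (rfl | rfl) <;> ext <;> simp [hx, hy]))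

section
variable {M : Type*} [Monoid M] (x y : M) (hx : x * x = 1) (hy : y * y = 1)

@[simp] theorem lift_a : lift x y hx hy a = x := by simp [lift, a]
@[simp] theorem lift_b : lift x y hx hy b = y := by simp [lift, b]

end

theorem not_isOfFinOrder_a_mul_b : ¬IsOfFinOrder (a * b) := by
  have h := orderOf_map_dvd (lift (DihedralGroup.sr (0 : ZMod 0)) (DihedralGroup.sr 1)
    (DihedralGroup.sr_mul_self 0) (DihedralGroup.sr_mul_self 1)) (a * b)
  rw [map_mul, lift_a, lift_b, DihedralGroup.sr_mul_sr, sub_zero, DihedralGroup.orderOf_r_one,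
    zero_dvd_iff] at h
  exact orderOf_eq_zero_iff.1 h

end InfDihedral

abbrev DAlg := MonoidAlgebra (ZMod 2) InfDihedral

namespace DAlg

open InfDihedral MonoidAlgebra ZModModule

noncomputable def w : DAlg := 1 + of _ _ a
noncomputable def z : DAlg := 1 + of _ _ b
noncomputable def ω : DAlg := w * z + z * w

theorem of_a : of (ZMod 2) _ a = 1 + w := (one_add_one_add _).symm
theorem of_b : of (ZMod 2) _ b = 1 + z := (one_add_one_add _).symm

theorem one_add_of_mul_self {g : InfDihedral} (hg : g * g = 1) :
    (1 + of (ZMod 2) _ g) * (1 + of _ _ g) = 0 := by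
  rw [one_add_mul_self, ← map_mul, hg, map_one, add_self]

theorem w_mul_self : w * w = 0 := one_add_of_mul_self a_mul_self
theorem z_mul_self : z * z = 0 := one_add_of_mul_self b_mul_self

theorem ω_eq : ω = of _ _ (a * b) + of _ _ (b * a) := by
  rw [ω, w, z, one_add_mul_one_add_add, map_mul, map_mul]

theorem adjoin_eq_top : Algebra.adjoin (ZMod 2) {of (ZMod 2) _ a, of _ _ b} = ⊤ := by
  simpa [Set.image_insert_eq] using adjoin_image_of_eq_top (k := ZMod 2) closure_a_b

theorem commute_ω (x : DAlg) : Commute x ω := by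
  refine Algebra.commute_of_mem_adjoin_of_forall_mem_commute (adjoin_eq_top ▸ Algebra.mem_top)
    ?_ |>.symm
  rintro _ (rfl | rfl) <;>
  · rw [Commute, SemiconjBy, ω_eq, mul_add, add_mul, ← map_mul, ← map_mul, ← map_mul, ← map_mul]
    simp only [← mul_assoc, a_mul_self, b_mul_self, one_mul]
    simp only [mul_assoc, a_mul_self, b_mul_self, mul_one]
    exact add_comm _ _

theorem eq_zero_of_mul_ω_eq_zero {v : DAlg} (hv : v * ω = 0) : v = 0 := by
  have h : v * of _ _ (a * b) = v * of _ _ (b * a) := by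
    rwa [ω_eq, mul_add, add_eq_zero_iff_eq_neg, ZModModule.neg_eq_self] at hv
  refine eq_zero_of_mul_of_eq_self (g := a * b * (a * b)) ?_ ?_
  · exact fun h => not_isOfFinOrder_a_mul_b (by simpa [← pow_two] using h.of_pow two_ne_zero)
  · rw [map_mul, ← mul_assoc, h, mul_assoc, ← map_mul, mul_assoc, ← mul_assoc a, a_mul_self,
      one_mul, b_mul_self, map_one, mul_one]

end DAlg

namespace extAlg

variable {A : Type*} [Semiring A] [Algebra (ZMod 2) A]

noncomputable def lift (x y : A) (hx : x * x = 0) (hy : y * y = 0) (hxy : x * y = y * x) :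
    extAlg →ₐ[ZMod 2] A :=
  RingQuot.liftAlgHom (ZMod 2) ⟨FreeAlgebra.lift (ZMod 2) ![x, y], by
    rintro _ _ ⟨⟩ <;> simp [hx, hy, hxy]⟩

section
variable (x y : A) (hx : x * x = 0) (hy : y * y = 0) (hxy : x * y = y * x)

@[simp] theorem lift_wE : lift x y hx hy hxy wE = x := by
  simp [lift, wE, RingQuot.mkRingHom_eq_mkAlgHom (ZMod 2)]
@[simp] theorem lift_zE : lift x y hx hy hxy zE = y := by
  simp [lift, zE, RingQuot.mkRingHom_eq_mkAlgHom (ZMod 2)]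

end

theorem wE_mul_self : wE * wE = 0 := by
  simpa [wE] using RingQuot.mkRingHom_rel relE.wsq
theorem zE_mul_self : zE * zE = 0 := by
  simpa [zE] using RingQuot.mkRingHom_rel relE.zsq
theorem wE_mul_zE : wE * zE = zE * wE := by
  simpa [wE, zE] using RingQuot.mkRingHom_rel relE.comm

theorem adjoin_eq_top : Algebra.adjoin (ZMod 2) {wE, zE} = ⊤ := by
  convert RingQuot.adjoin_range_mkAlgHom_ι (R := ZMod 2) relE
  ext x
  simp [Fin.exists_fin_succ, wE, zE, RingQuot.mkAlgHom, eq_comm]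

noncomputable def toDualDual : extAlg →ₐ[ZMod 2] DualNumber (DualNumber (ZMod 2)) :=
  lift (inl ε) ε (by rw [← inl_mul, eps_mul_eps, inl_zero]) eps_mul_eps (commute_eps_right _).eq

theorem linearIndependent_monomials :
    LinearIndependent (ZMod 2) ![(1 : extAlg), wE, zE, wE * zE] := by
  refine LinearIndependent.of_comp toDualDual.toLinearMap ?_
  rw [Fintype.linearIndependent_iff]
  intro c hc i
  simp [Fin.sum_univ_four, toDualDual] at hc
  have h := congrArg (fun u : DualNumber (DualNumber (ZMod 2)) =>
    (u.fst.fst, u.fst.snd, u.snd.fst, u.snd.snd)) hc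
  simp at h
  fin_cases i <;> simp_all

theorem span_monomials : Submodule.span (ZMod 2) {(1 : extAlg), wE, zE, wE * zE} = ⊤ := by
  refine Submodule.eq_top_of_one_mem_of_mul_mem adjoin_eq_top (Submodule.subset_span (by simp)) ?_
  rintro _ (rfl | rfl) p hp <;>
  refine (Submodule.span_le (p := (Submodule.span _ _).comap (LinearMap.mulLeft _ _))).2 ?_ hp <;>
  rintro _ (rfl | rfl | rfl | rfl) <;>
  simp only [SetLike.mem_coe, Submodule.mem_comap, LinearMap.mulLeft_apply, mul_one, ← mul_assoc,
    wE_mul_self, zE_mul_self, zero_mul, ← wE_mul_zE, mul_assoc _ zE zE, mul_zero,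
    Submodule.zero_mem] <;>
  exact Submodule.subset_span (by simp)

theorem finrank_eq_four : Module.finrank (ZMod 2) extAlg = 4 := by
  have h := finrank_span_eq_card linearIndependent_monomials
  rwa [show Set.range ![(1 : extAlg), wE, zE, wE * zE] = {1, wE, zE, wE * zE} by
    simp only [Matrix.range_cons, Matrix.range_empty, Set.union_empty, Set.singleton_union],
    span_monomials, finrank_top, Fintype.card_fin] at h

end extAlg

namespace R0dual

open ZModModule

theorem wK_mul_self : wK * wK = 0 := by
  simpa [wK] using RingQuot.mkRingHom_rel relK.wsq
theorem zK_mul_self : zK * zK = 0 := by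
  simpa [zK] using RingQuot.mkRingHom_rel relK.zsq
theorem thK_mul_self : thK * thK = 0 := by
  simpa [thK] using RingQuot.mkRingHom_rel relK.thsq
theorem wK_mul_thK : wK * thK = thK * wK := by
  simpa [wK, thK] using RingQuot.mkRingHom_rel relK.wth
theorem zK_mul_thK : zK * thK = thK * zK := by
  simpa [zK, thK] using RingQuot.mkRingHom_rel relK.zth

theorem adjoin_eq_top : Algebra.adjoin (ZMod 2) {wK, zK, thK} = ⊤ := by
  convert RingQuot.adjoin_range_mkAlgHom_ι (R := ZMod 2) relK
  ext x
  simp [Fin.exists_fin_succ, wK, zK, thK, RingQuot.mkAlgHom, eq_comm]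

theorem commute_thK (x : R0dual) : Commute thK x := by
  refine Algebra.commute_of_mem_adjoin_of_forall_mem_commute (adjoin_eq_top ▸ Algebra.mem_top) ?_
  rintro _ (rfl | rfl | rfl)
  exacts [wK_mul_thK.symm, zK_mul_thK.symm, Commute.refl _]

section Lift

variable {A : Type*} [Semiring A] [Algebra (ZMod 2) A]

noncomputable def lift (x y t : A) (hx : x * x = 0) (hy : y * y = 0) (ht : t * t = 0)
    (hxt : x * t = t * x) (hyt : y * t = t * y) : R0dual →ₐ[ZMod 2] A :=
  RingQuot.liftAlgHom (ZMod 2) ⟨FreeAlgebra.lift (ZMod 2) ![x, y, t], by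
    rintro _ _ ⟨⟩ <;> simp [hx, hy, ht, hxt, hyt]⟩

variable (x y t : A) (hx : x * x = 0) (hy : y * y = 0) (ht : t * t = 0)
  (hxt : x * t = t * x) (hyt : y * t = t * y)

@[simp] theorem lift_wK : lift x y t hx hy ht hxt hyt wK = x := by
  simp [lift, wK, RingQuot.mkRingHom_eq_mkAlgHom (ZMod 2)]
@[simp] theorem lift_zK : lift x y t hx hy ht hxt hyt zK = y := by
  simp [lift, zK, RingQuot.mkRingHom_eq_mkAlgHom (ZMod 2)]
@[simp] theorem lift_thK : lift x y t hx hy ht hxt hyt thK = t := by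
  simp [lift, thK, RingQuot.mkRingHom_eq_mkAlgHom (ZMod 2)]

end Lift

noncomputable def toDual : R0dual →ₐ[ZMod 2] DualNumber DAlg :=
  lift (inl DAlg.w) (inl DAlg.z) ε (by rw [← inl_mul, DAlg.w_mul_self, inl_zero])
    (by rw [← inl_mul, DAlg.z_mul_self, inl_zero]) eps_mul_eps (commute_eps_right _).eq
    (commute_eps_right _).eq

theorem toDual_wK : toDual wK = inl DAlg.w := lift_wK ..
theorem toDual_zK : toDual zK = inl DAlg.z := lift_zK ..
theorem toDual_thK : toDual thK = ε := lift_thK ..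

theorem one_add_wK_mul_self : (1 + wK) * (1 + wK) = 1 := by
  rw [one_add_mul_self, wK_mul_self, add_zero]
theorem one_add_zK_mul_self : (1 + zK) * (1 + zK) = 1 := by
  rw [one_add_mul_self, zK_mul_self, add_zero]

noncomputable def ofDAlg : DAlg →ₐ[ZMod 2] R0dual :=
  MonoidAlgebra.lift (ZMod 2) R0dual InfDihedral
    (InfDihedral.lift _ _ one_add_wK_mul_self one_add_zK_mul_self)

theorem ofDAlg_w : ofDAlg DAlg.w = wK := by
  simp [ofDAlg, DAlg.w, one_add_one_add]
theorem ofDAlg_z : ofDAlg DAlg.z = zK := by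
  simp [ofDAlg, DAlg.z, one_add_one_add]

theorem ofDAlg_ω : ofDAlg DAlg.ω = wK * zK + zK * wK := by
  rw [DAlg.ω, map_add, map_mul, map_mul, ofDAlg_w, ofDAlg_z]

noncomputable def ofDual : DualNumber DAlg →ₐ[ZMod 2] R0dual :=
  DualNumber.lift ⟨(ofDAlg, thK), thK_mul_self, fun _ => commute_thK _⟩

theorem toDual_comp_ofDAlg : toDual.comp ofDAlg = inlAlgHom _ _ _ := by
  refine AlgHom.ext_of_adjoin_eq_top DAlg.adjoin_eq_top ?_
  rintro _ (rfl | rfl)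
  · simp only [AlgHom.comp_apply, DAlg.of_a, map_add, map_one, ofDAlg_w, toDual_wK,
      inlAlgHom_apply]
  · simp only [AlgHom.comp_apply, DAlg.of_b, map_add, map_one, ofDAlg_z, toDual_zK,
      inlAlgHom_apply]

theorem ofDual_comp_toDual : ofDual.comp toDual = AlgHom.id _ _ := by
  refine AlgHom.ext_of_adjoin_eq_top adjoin_eq_top ?_
  rintro _ (rfl | rfl | rfl) <;> simp [toDual_wK, toDual_zK, toDual_thK, ofDual, ofDAlg_w, ofDAlg_z]

theorem toDual_ofDual (u : DualNumber DAlg) : toDual (ofDual u) = u := by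
  rw [ofDual, DualNumber.lift_apply_apply, map_add, map_mul, ← AlgHom.comp_apply,
    ← AlgHom.comp_apply, toDual_comp_ofDAlg, toDual_thK, inlAlgHom_apply, inlAlgHom_apply,
    inl_mul_eq_smul, ← inr_eq_smul_eps, inl_fst_add_inr_snd_eq]

noncomputable def dualEquiv : R0dual ≃ₐ[ZMod 2] DualNumber DAlg :=
  AlgEquiv.ofAlgHom toDual ofDual (AlgHom.ext toDual_ofDual) ofDual_comp_toDual

theorem dualEquiv_apply (x : R0dual) : dualEquiv x = toDual x := rfl
theorem dualEquiv_symm_apply (u : DualNumber DAlg) : dualEquiv.symm u = ofDual u := rfl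

theorem dualEquiv_symm_inl (s : DAlg) : dualEquiv.symm (inl s) = ofDAlg s :=
  DualNumber.lift_apply_inl _ s

noncomputable def μ₁ : R0dual →ₗ[ZMod 2] R0dual :=
  dualEquiv.symm.toLinearMap ∘ₗ epsDeriv DAlg.ω ∘ₗ dualEquiv.toLinearMap

theorem μ₁_apply (x : R0dual) : μ₁ x = dualEquiv.symm (epsDeriv DAlg.ω (dualEquiv x)) := rfl

theorem μ₁_wK : μ₁ wK = 0 := by
  rw [μ₁_apply, dualEquiv_apply, toDual_wK, epsDeriv_inl, map_zero]

theorem μ₁_zK : μ₁ zK = 0 := by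
  rw [μ₁_apply, dualEquiv_apply, toDual_zK, epsDeriv_inl, map_zero]

theorem μ₁_thK : μ₁ thK = wK * zK + zK * wK := by
  rw [μ₁_apply, dualEquiv_apply, toDual_thK, epsDeriv_eps, dualEquiv_symm_inl, ofDAlg_ω]

theorem μ₁_mul (x y : R0dual) : μ₁ (x * y) = μ₁ x * y + x * μ₁ y := by
  simp only [μ₁_apply, map_mul, epsDeriv_mul DAlg.commute_ω, map_add, AlgEquiv.symm_apply_apply]

theorem μ₁_μ₁ (x : R0dual) : μ₁ (μ₁ x) = 0 := by
  rw [μ₁_apply, μ₁_apply, AlgEquiv.apply_symm_apply, epsDeriv_epsDeriv, map_zero]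

theorem μ₁_eq_zero_iff {x : R0dual} : μ₁ x = 0 ↔ (dualEquiv x).snd = 0 := by
  rw [μ₁_apply, map_eq_zero_iff _ dualEquiv.symm.injective, epsDeriv_apply,
    ← inl_zero (M := DAlg), inl_injective.eq_iff]
  exact ⟨DAlg.eq_zero_of_mul_ω_eq_zero, fun h => by rw [h, zero_mul]⟩

noncomputable def toExt : R0dual →ₐ[ZMod 2] extAlg :=
  lift wE zE 0 extAlg.wE_mul_self extAlg.zE_mul_self (mul_zero 0) (by rw [mul_zero, zero_mul])
    (by rw [mul_zero, zero_mul])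

theorem toExt_wK : toExt wK = wE := lift_wK ..
theorem toExt_zK : toExt zK = zE := lift_zK ..
theorem toExt_thK : toExt thK = 0 := lift_thK ..

theorem toExt_surjective : Function.Surjective toExt := by
  rw [← AlgHom.range_eq_top, eq_top_iff, ← extAlg.adjoin_eq_top, Algebra.adjoin_le_iff]
  rintro _ (rfl | rfl)
  exacts [⟨wK, toExt_wK⟩, ⟨zK, toExt_zK⟩]

theorem toExt_dualEquiv_symm (u : DualNumber DAlg) :
    toExt (dualEquiv.symm u) = toExt (ofDAlg u.fst) := by
  rw [dualEquiv_symm_apply, ofDual, DualNumber.lift_apply_apply, map_add, map_mul, toExt_thK,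
    mul_zero, add_zero]

theorem toExt_μ₁ (x : R0dual) : toExt (μ₁ x) = 0 := by
  rw [μ₁_apply, epsDeriv_apply, dualEquiv_symm_inl, map_mul, map_mul, ofDAlg_ω, map_add, map_mul,
    map_mul, toExt_wK, toExt_zK, extAlg.wE_mul_zE, add_self, mul_zero]

/-- `F₂[D∞] ⧸ (ω)` satisfies the relations of `extAlg`, so `σ` is a left inverse of the map
`F₂[D∞] ⧸ (ω) → extAlg` induced by `toExt ∘ ofDAlg`. -/
theorem exists_mul_ω_of_toExt_ofDAlg_eq_zero {s : DAlg} (hs : toExt (ofDAlg s) = 0) :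
    ∃ p, p * DAlg.ω = s := by
  let I := TwoSidedIdeal.ofCentral DAlg.ω DAlg.commute_ω
  let mk := I.ringCon.mkₐ (ZMod 2)
  let σ : extAlg →ₐ[ZMod 2] I.ringCon.Quotient := extAlg.lift (mk DAlg.w) (mk DAlg.z)
    (by rw [← map_mul, DAlg.w_mul_self, map_zero]) (by rw [← map_mul, DAlg.z_mul_self, map_zero])
    (by
      rw [← map_mul, ← map_mul, RingCon.mkₐ_apply, RingCon.mkₐ_apply, RingCon.eq,
        TwoSidedIdeal.rel_iff, sub_eq_add, TwoSidedIdeal.mem_ofCentral]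
      exact ⟨1, one_mul _⟩)
  have hσ : σ.comp (toExt.comp ofDAlg) = mk := by
    refine AlgHom.ext_of_adjoin_eq_top DAlg.adjoin_eq_top ?_
    rintro _ (rfl | rfl)
    · simp only [AlgHom.comp_apply, DAlg.of_a, map_add, map_one, ofDAlg_w, toExt_wK,
        extAlg.lift_wE, σ]
    · simp only [AlgHom.comp_apply, DAlg.of_b, map_add, map_one, ofDAlg_z, toExt_zK,
        extAlg.lift_zE, σ]
  have hmk : mk s = mk 0 := by
    rw [map_zero, ← hσ, AlgHom.comp_apply, AlgHom.comp_apply, hs, map_zero]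
  rwa [RingCon.mkₐ_apply, RingCon.mkₐ_apply, RingCon.eq, ← TwoSidedIdeal.mem_iff,
    TwoSidedIdeal.mem_ofCentral] at hmk

theorem exists_cycle_toExt_eq (y : extAlg) : ∃ x, μ₁ x = 0 ∧ toExt x = y := by
  obtain ⟨x, rfl⟩ := toExt_surjective y
  refine ⟨dualEquiv.symm (inl (dualEquiv x).fst), ?_, ?_⟩
  · rw [μ₁_eq_zero_iff, AlgEquiv.apply_symm_apply, snd_inl]
  · rw [toExt_dualEquiv_symm, fst_inl, ← toExt_dualEquiv_symm, AlgEquiv.symm_apply_apply]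

theorem exists_μ₁_eq_of_toExt_eq_zero {x : R0dual} (hx : μ₁ x = 0) (hq : toExt x = 0) :
    ∃ y, μ₁ y = x := by
  rw [μ₁_eq_zero_iff] at hx
  rw [← dualEquiv.symm_apply_apply x, toExt_dualEquiv_symm] at hq
  obtain ⟨p, hp⟩ := exists_mul_ω_of_toExt_ofDAlg_eq_zero hq
  refine ⟨dualEquiv.symm (inr p), ?_⟩
  rw [μ₁_apply, AlgEquiv.apply_symm_apply, epsDeriv_inr, hp, AlgEquiv.symm_apply_eq]
  exact TrivSqZeroExt.ext rfl hx.symm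

end R0dual

/-- There is a well-defined square-zero derivation `μ₁` on `R₀^!` with
`μ₁(w) = μ₁(z) = 0` and `μ₁(θ) = wz + zw`, and the homology of `(R₀^!, μ₁)` is
isomorphic as an algebra to the exterior algebra `E = F₂⟨w,z⟩/(w², z², wz+zw)`
(realized by a ring homomorphism `q : R₀^! → E` killing `θ` which is surjective on
cycles with kernel on cycles exactly the boundaries); `E` has dimension `4` over
`F₂` with basis `{1, w, z, wz}`. -/
theorem stmt_12 :
    ∃ μ₁ : R0dual →ₗ[ZMod 2] R0dual,
      μ₁ wK = 0 ∧ μ₁ zK = 0 ∧ μ₁ thK = wK * zK + zK * wK ∧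
      (∀ a b, μ₁ (a * b) = μ₁ a * b + a * μ₁ b) ∧
      (∀ a, μ₁ (μ₁ a) = 0) ∧
      ∃ q : R0dual →+* extAlg,
        q wK = wE ∧ q zK = zE ∧ q thK = 0 ∧
        (∀ x, q (μ₁ x) = 0) ∧
        (∀ y : extAlg, ∃ x, μ₁ x = 0 ∧ q x = y) ∧
        (∀ x, μ₁ x = 0 → q x = 0 → ∃ y, μ₁ y = x) ∧
        Module.finrank (ZMod 2) extAlg = 4 ∧
        LinearIndependent (ZMod 2) ![(1 : extAlg), wE, zE, wE * zE] ∧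
        Submodule.span (ZMod 2) {(1 : extAlg), wE, zE, wE * zE} = ⊤ := by
  open R0dual in
  exact ⟨μ₁, μ₁_wK, μ₁_zK, μ₁_thK, μ₁_mul, μ₁_μ₁, toExt.toRingHom, toExt_wK, toExt_zK, toExt_thK,
    toExt_μ₁, exists_cycle_toExt_eq, fun _ => exists_μ₁_eq_of_toExt_eq_zero,
    extAlg.finrank_eq_four, extAlg.linearIndependent_monomials, extAlg.span_monomials⟩
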